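/- Let 𝓛 be a finite set of type-⌞ L-shapes all having both arm lengths equal to a common value a > 0, with pairwise distinct corner x-coordinates and pairwise distinct corner y-coordinates. Partition the plane into square boxes of side a and partition 𝓛 into four classes S_{k_r,k_c} (k_r, k_c ∈ {0,1}) according to the parities of the row and column indices of the box containing each corner. Then within each class, L-shapes whose corners lie in distinct boxes are disjoint, and the intersection graph of the L-shapes whose corners lie in any single box is a permutation graph. Consequently α(G(𝓛)) ≤ α(G[S_{0,0}]) + α(G[S_{0,1}]) + α(G[S_{1,0}]) + α(G[S_{1,1}]) ≤ 4 · max_{k_r,k_c} α(G[S_{k_r,k_c}]). -/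

import Mathlib

/-- An L-shape of type ⌞ given by its corner `(xc, yc)`, horizontal tip x-coordinate `xh`
and vertical tip y-coordinate `yv`. -/
structure LShape where
  xc : ℝ
  yc : ℝ
  xh : ℝ
  yv : ℝ
  hx : xc ≤ xh
  hy : yc ≤ yv

/-- The point set of a type-⌞ L-shape. -/
def LShape.pts (l : LShape) : Set (ℝ × ℝ) :=
  {p | (p.2 = l.yc ∧ l.xc ≤ p.1 ∧ p.1 ≤ l.xh) ∨ (p.1 = l.xc ∧ l.yc ≤ p.2 ∧ p.2 ≤ l.yv)}

/-- The corner of `l` lies inside the half-open grid box `(r, c)` of side length `s`. -/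
def InBox (s : ℝ) (r c : ℤ) (l : LShape) : Prop :=
  (c : ℝ) * s ≤ l.xc ∧ l.xc < ((c : ℝ) + 1) * s ∧ (r : ℝ) * s ≤ l.yc ∧ l.yc < ((r : ℝ) + 1) * s

/-- The intersection graph of a finite set of L-shapes. -/
def interGraph (S : Finset LShape) : SimpleGraph {l : LShape // l ∈ S} where
  Adj a b := a ≠ b ∧ ((a : LShape).pts ∩ (b : LShape).pts).Nonempty
  symm := by
    constructor
    rintro a b ⟨h1, h2⟩
    exact ⟨h1.symm, by rwa [Set.inter_comm]⟩
  loopless := by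
    constructor
    rintro a ⟨h1, -⟩
    exact h1 rfl

/-- The inversion graph of a permutation `π` of `{1, …, n}`: edges are the inversions,
i.e. pairs `(i, j)` with `(i - j) * (π⁻¹ i - π⁻¹ j) < 0`. -/
def invGraph {n : ℕ} (π : Equiv.Perm (Fin n)) : SimpleGraph (Fin n) where
  Adj i j := ((i : ℤ) - (j : ℤ)) * ((π.symm i : ℤ) - (π.symm j : ℤ)) < 0
  symm := by
    constructor
    intro i j h
    have e : ((j : ℤ) - (i : ℤ)) * ((π.symm j : ℤ) - (π.symm i : ℤ))
        = ((i : ℤ) - (j : ℤ)) * ((π.symm i : ℤ) - (π.symm j : ℤ)) := by ring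
    linarith
  loopless := by
    constructor
    intro i h
    simp at h

/-- A graph is a permutation graph if it is isomorphic to the inversion graph of
some permutation. -/
def IsPermutationGraph {V : Type*} (G : SimpleGraph V) : Prop :=
  ∃ (n : ℕ) (π : Equiv.Perm (Fin n)), Nonempty (G ≃g invGraph π)

/-- The row index of the side-`a` grid box containing the corner of `l`. -/
noncomputable def boxRow (a : ℝ) (l : LShape) : ℤ := ⌊l.yc / a⌋

/-- The column index of the side-`a` grid box containing the corner of `l`. -/
noncomputable def boxCol (a : ℝ) (l : LShape) : ℤ := ⌊l.xc / a⌋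

/-- A finite set of type-⌞ L-shapes is independent if its members are pairwise disjoint. -/
def IndepL (t : Finset LShape) : Prop :=
  ∀ l₁ ∈ t, ∀ l₂ ∈ t, l₁ ≠ l₂ → l₁.pts ∩ l₂.pts = ∅

/-- The maximum size of an independent subset of a finite set of type-⌞ L-shapes. -/
noncomputable def alphaL (S : Finset LShape) : ℕ := by
  classical exact S.powerset.sup fun t => if IndepL t then t.card else 0

/-- The class of members of `L` whose corner box has row index `≡ kr` and column index
`≡ kc (mod 2)`. -/
noncomputable def cls (a : ℝ) (L : Finset LShape) (kr kc : ℤ) : Finset LShape :=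
  L.filter fun l => boxRow a l % 2 = kr ∧ boxCol a l % 2 = kc

/-!
Two ⌞-shapes with arm length `a` can meet only if their corners are within `a` of each other in
both coordinates. Distinct boxes of the same parity class are separated by a whole box in some
direction, so corners in them are more than `a` apart. Inside one box the corners are less than
`a` apart, and two shapes meet exactly when one corner lies above and to the left of the other;
ordering the shapes once by corner x-coordinate and once by corner y-coordinate thus exhibits the
intersection graph as the inversion graph of the permutation relating the two orders. Finally an
independent set splits into independent sets of the four classes.
-/

lemma abs_sub_lt_of_floor_div_eq {a x y : ℝ} (ha : 0 < a) (h : ⌊x / a⌋ = ⌊y / a⌋) :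
    |x - y| < a := by
  have := Int.abs_sub_lt_one_of_floor_eq_floor h
  rwa [← sub_div, abs_div, abs_of_pos ha, div_lt_one ha] at this

lemma lt_abs_sub_of_floor_div_emod_two_eq {a x y : ℝ} (ha : 0 < a)
    (hpar : ⌊x / a⌋ % 2 = ⌊y / a⌋ % 2) (hne : ⌊x / a⌋ ≠ ⌊y / a⌋) : a < |x - y| := by
  have one_lt_sub_of_floor_add_two_le : ∀ u v : ℝ, ⌊u⌋ + 2 ≤ ⌊v⌋ → 1 < v - u := fun u v h => by
    have : (⌊u⌋ : ℝ) + 2 ≤ ⌊v⌋ := by exact_mod_cast h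
    linarith [Int.lt_floor_add_one u, Int.floor_le v]
  suffices 1 < |x / a - y / a| by
    rwa [← sub_div, abs_div, abs_of_pos ha, one_lt_div ha] at this
  rcases hne.lt_or_gt with h | h
  · rw [abs_sub_comm]
    exact (one_lt_sub_of_floor_add_two_le _ _ (by omega)).trans_le (le_abs_self _)
  · exact (one_lt_sub_of_floor_add_two_le _ _ (by omega)).trans_le (le_abs_self _)

namespace LShape

def HasArms (a : ℝ) (l : LShape) : Prop :=
  l.xh - l.xc = a ∧ l.yv - l.yc = a

lemma pts_subset_Icc_prod_Icc (l : LShape) : l.pts ⊆ Set.Icc l.xc l.xh ×ˢ Set.Icc l.yc l.yv := by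
  rintro p (⟨hy, hx₁, hx₂⟩ | ⟨hx, hy₁, hy₂⟩)
  · exact ⟨⟨hx₁, hx₂⟩, hy.ge, hy.le.trans l.hy⟩
  · exact ⟨⟨hx.ge, hx.le.trans l.hx⟩, hy₁, hy₂⟩

lemma abs_sub_le_of_inter_nonempty {a : ℝ} {l₁ l₂ : LShape} (h₁ : l₁.HasArms a)
    (h₂ : l₂.HasArms a) (h : (l₁.pts ∩ l₂.pts).Nonempty) :
    |l₁.xc - l₂.xc| ≤ a ∧ |l₁.yc - l₂.yc| ≤ a := by
  obtain ⟨p, hp₁, hp₂⟩ := h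
  obtain ⟨⟨hx₁, hx₁'⟩, hy₁, hy₁'⟩ := l₁.pts_subset_Icc_prod_Icc hp₁
  obtain ⟨⟨hx₂, hx₂'⟩, hy₂, hy₂'⟩ := l₂.pts_subset_Icc_prod_Icc hp₂
  obtain ⟨hl₁x, hl₁y⟩ := h₁
  obtain ⟨hl₂x, hl₂y⟩ := h₂
  exact ⟨abs_sub_le_iff.2 ⟨by linarith, by linarith⟩, abs_sub_le_iff.2 ⟨by linarith, by linarith⟩⟩

lemma pts_inter_eq_empty_of_lt {l₁ l₂ : LShape} (hx : l₁.xc < l₂.xc) (hy : l₁.yc < l₂.yc) :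
    l₁.pts ∩ l₂.pts = ∅ := by
  refine Set.eq_empty_iff_forall_notMem.2 ?_
  rintro p ⟨hp₁ | hp₁, hp₂ | hp₂⟩ <;> linarith [hp₁.1, hp₁.2.1, hp₂.1, hp₂.2.1]

lemma mk_mem_pts_inter {l₁ l₂ : LShape} (hx : l₁.xc ≤ l₂.xc) (hx' : l₂.xc ≤ l₁.xh)
    (hy : l₂.yc ≤ l₁.yc) (hy' : l₁.yc ≤ l₂.yv) : (l₂.xc, l₁.yc) ∈ l₁.pts ∩ l₂.pts :=
  ⟨Or.inl ⟨rfl, hx, hx'⟩, Or.inr ⟨rfl, hy, hy'⟩⟩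

lemma pts_inter_nonempty_iff {a : ℝ} {l₁ l₂ : LShape} (h₁ : l₁.HasArms a) (h₂ : l₂.HasArms a)
    (hx : |l₁.xc - l₂.xc| ≤ a) (hy : |l₁.yc - l₂.yc| ≤ a)
    (hxne : l₁.xc ≠ l₂.xc) (hyne : l₁.yc ≠ l₂.yc) :
    (l₁.pts ∩ l₂.pts).Nonempty ↔ (l₁.xc - l₂.xc) * (l₁.yc - l₂.yc) < 0 := by
  obtain ⟨hx₁, hx₂⟩ := abs_sub_le_iff.1 hx
  obtain ⟨hy₁, hy₂⟩ := abs_sub_le_iff.1 hy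
  obtain ⟨hl₁x, hl₁y⟩ := h₁
  obtain ⟨hl₂x, hl₂y⟩ := h₂
  rcases hxne.lt_or_gt with hxlt | hxlt <;> rcases hyne.lt_or_gt with hylt | hylt
  · refine iff_of_false ?_ (mul_pos_of_neg_of_neg (by linarith) (by linarith)).not_gt
    rw [pts_inter_eq_empty_of_lt hxlt hylt]
    exact Set.not_nonempty_empty
  · exact iff_of_true ⟨_, mk_mem_pts_inter hxlt.le (by linarith) hylt.le (by linarith)⟩
      (mul_neg_of_neg_of_pos (by linarith) (by linarith))
  · refine iff_of_true ⟨(l₁.xc, l₂.yc), ?_⟩ (mul_neg_of_pos_of_neg (by linarith) (by linarith))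
    rw [Set.inter_comm]
    exact mk_mem_pts_inter hxlt.le (by linarith) hylt.le (by linarith)
  · refine iff_of_false ?_ (mul_pos (by linarith) (by linarith)).not_gt
    rw [Set.inter_comm, pts_inter_eq_empty_of_lt hxlt hylt]
    exact Set.not_nonempty_empty

lemma pts_inter_eq_empty_of_boxes_ne {a : ℝ} (ha : 0 < a) {l₁ l₂ : LShape}
    (h₁ : l₁.HasArms a) (h₂ : l₂.HasArms a)
    (hrow : boxRow a l₁ % 2 = boxRow a l₂ % 2) (hcol : boxCol a l₁ % 2 = boxCol a l₂ % 2)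
    (hne : (boxRow a l₁, boxCol a l₁) ≠ (boxRow a l₂, boxCol a l₂)) :
    l₁.pts ∩ l₂.pts = ∅ := by
  by_contra hinter
  obtain ⟨hx, hy⟩ :=
    abs_sub_le_of_inter_nonempty h₁ h₂ (Set.nonempty_iff_ne_empty.2 hinter)
  by_cases hr : boxRow a l₁ = boxRow a l₂
  · have hc : boxCol a l₁ ≠ boxCol a l₂ := fun hc => hne (by rw [hr, hc])
    exact (lt_abs_sub_of_floor_div_emod_two_eq ha hcol hc).not_ge hx
  · exact (lt_abs_sub_of_floor_div_emod_two_eq ha hrow hr).not_ge hy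

end LShape

lemma sub_mul_sub_neg_iff_of_lt_iff {V R S : Type*} [Ring R] [LinearOrder R]
    [IsStrictOrderedRing R] [Ring S] [LinearOrder S] [IsStrictOrderedRing S]
    (f g : V → R) (f' g' : V → S) (hf : ∀ u v, f u < f v ↔ f' u < f' v)
    (hg : ∀ u v, g u < g v ↔ g' u < g' v) (u v : V) :
    (f u - f v) * (g u - g v) < 0 ↔ (f' u - f' v) * (g' u - g' v) < 0 := by
  simp only [mul_neg_iff, sub_pos, sub_neg, hf, hg]

section PermutationGraph

variable {V : Type*} [Fintype V]

lemma exists_equiv_fin_lt_iff {β : Type*} [LinearOrder β] (f : V → β) (hf : Function.Injective f) :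
    ∃ e : V ≃ Fin (Fintype.card V), ∀ u v, e u < e v ↔ f u < f v := by
  let _ : LinearOrder V := LinearOrder.lift' f hf
  exact ⟨(Fintype.orderIsoFinOfCardEq V rfl).symm.toEquiv,
    fun u v => (Fintype.orderIsoFinOfCardEq V rfl).symm.lt_iff_lt⟩

/-- The permutation is the one carrying the order of `V` by `f` to its order by `g`. -/
lemma isPermutationGraph_of_adj_iff {R : Type*} [Ring R] [LinearOrder R]
    [IsStrictOrderedRing R] (G : SimpleGraph V) (f g : V → R)
    (hf : Function.Injective f) (hg : Function.Injective g)
    (hG : ∀ u v, G.Adj u v ↔ (f u - f v) * (g u - g v) < 0) : IsPermutationGraph G := by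
  obtain ⟨ex, hex⟩ := exists_equiv_fin_lt_iff f hf
  obtain ⟨ey, hey⟩ := exists_equiv_fin_lt_iff g hg
  have cast_lt_iff (e : V ≃ Fin (Fintype.card V)) (u v : V) :
      ((e u : ℕ) : ℤ) < (e v : ℕ) ↔ e u < e v := by
    rw [Nat.cast_lt, Fin.lt_def]
  refine ⟨_, ey.symm.trans ex, ⟨⟨ex, fun {u v} => ?_⟩⟩⟩
  simp only [invGraph, Equiv.symm_trans_apply, Equiv.symm_symm, Equiv.symm_apply_apply]
  rw [hG, sub_mul_sub_neg_iff_of_lt_iff (fun w => ((ex w : ℕ) : ℤ)) (fun w => ((ey w : ℕ) : ℤ))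
    f g (fun u v => (cast_lt_iff ex u v).trans (hex u v))
    (fun u v => (cast_lt_iff ey u v).trans (hey u v))]

end PermutationGraph

lemma IndepL.mono {s t : Finset LShape} (ht : IndepL t) (hst : s ⊆ t) : IndepL s :=
  fun l₁ h₁ l₂ h₂ => ht l₁ (hst h₁) l₂ (hst h₂)

lemma card_le_alphaL {S t : Finset LShape} (hsub : t ⊆ S) (hind : IndepL t) :
    t.card ≤ alphaL S := by
  classical
  unfold alphaL
  refine le_trans ?_ (Finset.le_sup (Finset.mem_powerset.2 hsub))
  rw [if_pos hind]

lemma alphaL_le {S : Finset LShape} {m : ℕ} (h : ∀ t ⊆ S, IndepL t → t.card ≤ m) :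
    alphaL S ≤ m := by
  classical
  refine Finset.sup_le fun t ht => ?_
  split_ifs with hind
  · exact h t (Finset.mem_powerset.1 ht) hind
  · exact Nat.zero_le m

lemma alphaL_le_sum_of_subset_biUnion {ι : Type*} [DecidableEq LShape] {L : Finset LShape}
    (I : Finset ι) (S : ι → Finset LShape) (hL : L ⊆ I.biUnion S) :
    alphaL L ≤ ∑ i ∈ I, alphaL (S i) := by
  refine alphaL_le fun t ht hind => ?_
  have hcover : t = I.biUnion fun i => t ∩ S i := by
    ext l
    simp only [Finset.mem_biUnion, Finset.mem_inter]
    exact ⟨fun hl => (Finset.mem_biUnion.1 (hL (ht hl))).imp fun i hi => ⟨hi.1, hl, hi.2⟩,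
      fun ⟨_, _, hl, _⟩ => hl⟩
  calc t.card = (I.biUnion fun i => t ∩ S i).card := congrArg _ hcover
    _ ≤ ∑ i ∈ I, (t ∩ S i).card := Finset.card_biUnion_le
    _ ≤ ∑ i ∈ I, alphaL (S i) := Finset.sum_le_sum fun i _ =>
      card_le_alphaL Finset.inter_subset_right (hind.mono Finset.inter_subset_left)

lemma isPermutationGraph_interGraph_of_same_box {a : ℝ} (ha : 0 < a) {T : Finset LShape}
    {r c : ℤ} (harms : ∀ l ∈ T, l.HasArms a)
    (hbox : ∀ l ∈ T, boxRow a l = r ∧ boxCol a l = c)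
    (hxd : ∀ l₁ ∈ T, ∀ l₂ ∈ T, l₁ ≠ l₂ → l₁.xc ≠ l₂.xc)
    (hyd : ∀ l₁ ∈ T, ∀ l₂ ∈ T, l₁ ≠ l₂ → l₁.yc ≠ l₂.yc) :
    IsPermutationGraph (interGraph T) := by
  have injective_of {f : LShape → ℝ} (hd : ∀ l₁ ∈ T, ∀ l₂ ∈ T, l₁ ≠ l₂ → f l₁ ≠ f l₂) :
      Function.Injective fun l : {l // l ∈ T} => f l :=
    fun u v huv => Subtype.ext (not_imp_not.1 (hd u u.2 v v.2) huv)
  refine isPermutationGraph_of_adj_iff _ (fun l => l.1.xc) (fun l => l.1.yc)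
    (injective_of hxd) (injective_of hyd) fun u v => ?_
  by_cases huv : u = v
  · subst huv
    simp only [sub_self, mul_zero, lt_self_iff_false, iff_false]
    exact (interGraph T).loopless.irrefl u
  have huv' : u.1 ≠ v.1 := fun h => huv (Subtype.ext h)
  obtain ⟨hur, huc⟩ := hbox u u.2
  obtain ⟨hvr, hvc⟩ := hbox v v.2
  refine (and_iff_right huv).trans (LShape.pts_inter_nonempty_iff (harms u u.2) (harms v v.2)
    ?_ ?_ (hxd u u.2 v v.2 huv') (hyd u u.2 v v.2 huv'))
  · exact (abs_sub_lt_of_floor_div_eq ha (huc.trans hvc.symm)).le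
  · exact (abs_sub_lt_of_floor_div_eq ha (hur.trans hvr.symm)).le

lemma alphaL_le_sum_alphaL_cls (a : ℝ) (L : Finset LShape) :
    alphaL L ≤ alphaL (cls a L 0 0) + alphaL (cls a L 0 1)
      + alphaL (cls a L 1 0) + alphaL (cls a L 1 1) := by
  classical
  have hcover : L ⊆ (({0, 1} : Finset ℤ) ×ˢ ({0, 1} : Finset ℤ)).biUnion
      fun k => cls a L k.1 k.2 := by
    intro l hl
    simp only [Finset.mem_biUnion, Finset.mem_product, Finset.mem_insert,
      Finset.mem_singleton, cls, Finset.mem_filter]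
    refine ⟨(boxRow a l % 2, boxCol a l % 2), ⟨?_, ?_⟩, hl, rfl, rfl⟩ <;> omega
  have := alphaL_le_sum_of_subset_biUnion _ _ hcover
  simpa [Finset.sum_product, add_assoc] using this

/-- Let `L` be a finite set of type-⌞ L-shapes all of whose arm lengths equal `a > 0`, with
pairwise distinct corner x- and y-coordinates.  Partitioning the plane into square boxes of
side `a` and partitioning `L` into the four parity classes `S_{kr,kc}` of the box of the
corner: within a class, L-shapes with corners in distinct boxes are disjoint; the
intersection graph of the L-shapes with corner in any single box is a permutation graph;
and `α(G(L)) ≤ α(G[S₀₀]) + α(G[S₀₁]) + α(G[S₁₀]) + α(G[S₁₁]) ≤ 4 · max α(G[S_{kr,kc}])`. -/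
theorem stmt17 (a : ℝ) (ha : 0 < a) (L : Finset LShape)
    (heq : ∀ l ∈ L, l.xh - l.xc = a ∧ l.yv - l.yc = a)
    (hxd : ∀ l₁ ∈ L, ∀ l₂ ∈ L, l₁ ≠ l₂ → l₁.xc ≠ l₂.xc)
    (hyd : ∀ l₁ ∈ L, ∀ l₂ ∈ L, l₁ ≠ l₂ → l₁.yc ≠ l₂.yc) :
    (∀ kr kc : ℤ, ∀ l₁ ∈ cls a L kr kc, ∀ l₂ ∈ cls a L kr kc,
        (boxRow a l₁, boxCol a l₁) ≠ (boxRow a l₂, boxCol a l₂) →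
        l₁.pts ∩ l₂.pts = ∅) ∧
      (∀ r c : ℤ,
        IsPermutationGraph (interGraph (L.filter fun l => boxRow a l = r ∧ boxCol a l = c))) ∧
      alphaL L ≤ alphaL (cls a L 0 0) + alphaL (cls a L 0 1)
          + alphaL (cls a L 1 0) + alphaL (cls a L 1 1) ∧
      alphaL (cls a L 0 0) + alphaL (cls a L 0 1) + alphaL (cls a L 1 0) + alphaL (cls a L 1 1)
        ≤ 4 * max (max (alphaL (cls a L 0 0)) (alphaL (cls a L 0 1)))
            (max (alphaL (cls a L 1 0)) (alphaL (cls a L 1 1))) := by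
  refine ⟨fun kr kc l₁ h₁ l₂ h₂ hne => ?_, fun r c => ?_, alphaL_le_sum_alphaL_cls a L, by omega⟩
  · simp only [cls, Finset.mem_filter] at h₁ h₂
    exact LShape.pts_inter_eq_empty_of_boxes_ne ha (heq l₁ h₁.1) (heq l₂ h₂.1)
      (h₁.2.1.trans h₂.2.1.symm) (h₁.2.2.trans h₂.2.2.symm) hne
  · have hsub : L.filter (fun l => boxRow a l = r ∧ boxCol a l = c) ⊆ L := Finset.filter_subset _ _
    exact isPermutationGraph_interGraph_of_same_box ha (fun l hl => heq l (hsub hl))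
      (fun l hl => (Finset.mem_filter.1 hl).2)
      (fun l₁ h₁ l₂ h₂ => hxd l₁ (hsub h₁) l₂ (hsub h₂))
      (fun l₁ h₁ l₂ h₂ => hyd l₁ (hsub h₁) l₂ (hsub h₂))
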